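/- arXiv:1504.07326 — 4 statements merged into one kernel-verified Lean document; each statement's English description precedes it below -/
import Mathlib

section
/- For every r ∈ ℝ, the sum over all integers j of φ(r − j) equals 1 (the sum has only finitely many nonzero terms since φ vanishes outside [−2, 2]). This is the one-dimensional unity condition underlying the discrete delta function. -/
/-!
Reindexing by `⌊r⌋` reduces to `r ∈ [0, 1]`, where only `j ∈ {-1, 0, 1, 2}` contribute.
For `t ∈ [0, 1]` all four radicands equal `1 + 4t - 4t²`, and the square roots cancel in pairs
(`φ(t) + φ(t + 1) = (3 - 2t) / 4` and `φ(1 - t) + φ(2 - t) = (1 + 2t) / 4`), leaving `1`.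
-/

/-- The Peskin four-point kernel. -/
noncomputable def peskinPhi (r : ℝ) : ℝ :=
  if |r| ≤ 1 then (3 - 2 * |r| + Real.sqrt (1 + 4 * |r| - 4 * |r| ^ 2)) / 8
  else if |r| ≤ 2 then (5 - 2 * |r| - Real.sqrt (-7 + 12 * |r| - 4 * |r| ^ 2)) / 8
  else 0

lemma peskinPhi_neg (x : ℝ) : peskinPhi (-x) = peskinPhi x := by
  rw [peskinPhi, peskinPhi, abs_neg]

lemma peskinPhi_eq_zero_of_two_le_abs {x : ℝ} (h : 2 ≤ |x|) : peskinPhi x = 0 := by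
  rw [peskinPhi, if_neg (by linarith)]
  rcases h.eq_or_lt with h2 | h2
  · rw [if_pos h2.ge, ← h2]
    norm_num
  · rw [if_neg h2.not_ge]

lemma peskinPhi_of_mem_Icc_zero_one {x : ℝ} (hx : x ∈ Set.Icc (0 : ℝ) 1) :
    peskinPhi x = (3 - 2 * x + Real.sqrt (1 + 4 * x - 4 * x ^ 2)) / 8 := by
  rw [peskinPhi, abs_of_nonneg hx.1, if_pos hx.2]

lemma peskinPhi_of_mem_Icc_one_two {x : ℝ} (hx : x ∈ Set.Icc (1 : ℝ) 2) :
    peskinPhi x = (5 - 2 * x - Real.sqrt (-7 + 12 * x - 4 * x ^ 2)) / 8 := by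
  rw [peskinPhi, abs_of_nonneg (by linarith [hx.1])]
  rcases hx.1.eq_or_lt with h1 | h1
  · rw [if_pos h1.ge, ← h1]
    norm_num
  · rw [if_neg h1.not_ge, if_pos hx.2]

lemma peskinPhi_sub_intCast_eq_zero {t : ℝ} (ht : t ∈ Set.Icc (0 : ℝ) 1) {j : ℤ}
    (hj : j ∉ Finset.Icc (-1 : ℤ) 2) : peskinPhi (t - j) = 0 := by
  rw [Finset.mem_Icc, not_and_or, not_le, not_le] at hj
  apply peskinPhi_eq_zero_of_two_le_abs
  rcases hj with hj | hj
  · have : (j : ℝ) ≤ -2 := by exact_mod_cast Int.le_sub_one_of_lt hj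
    rw [le_abs]; left; linarith [ht.1]
  · have : (3 : ℝ) ≤ j := by exact_mod_cast hj
    rw [le_abs]; right; linarith [ht.2]

lemma sum_peskinPhi_sub_intCast_Icc {t : ℝ} (ht : t ∈ Set.Icc (0 : ℝ) 1) :
    ∑ j ∈ Finset.Icc (-1 : ℤ) 2, peskinPhi (t - j) = 1 := by
  obtain ⟨ht0, ht1⟩ := ht
  have hIcc : Finset.Icc (-1 : ℤ) 2 = {-1, 0, 1, 2} := by decide
  rw [hIcc, Finset.sum_insert (by decide), Finset.sum_insert (by decide),
    Finset.sum_insert (by decide), Finset.sum_singleton]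
  push_cast
  rw [show t - -1 = t + 1 by ring, sub_zero, show t - 1 = -(1 - t) by ring,
    show t - 2 = -(2 - t) by ring, peskinPhi_neg, peskinPhi_neg,
    peskinPhi_of_mem_Icc_one_two ⟨by linarith, by linarith⟩,
    peskinPhi_of_mem_Icc_zero_one ⟨ht0, ht1⟩,
    peskinPhi_of_mem_Icc_zero_one ⟨by linarith, by linarith⟩,
    peskinPhi_of_mem_Icc_one_two ⟨by linarith, by linarith⟩]
  rw [show -7 + 12 * (t + 1) - 4 * (t + 1) ^ 2 = 1 + 4 * t - 4 * t ^ 2 by ring,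
    show 1 + 4 * (1 - t) - 4 * (1 - t) ^ 2 = 1 + 4 * t - 4 * t ^ 2 by ring,
    show -7 + 12 * (2 - t) - 4 * (2 - t) ^ 2 = 1 + 4 * t - 4 * t ^ 2 by ring]
  ring

lemma tsum_sub_intCast_eq_tsum_fract_sub {α : Type*} [AddCommMonoid α] [TopologicalSpace α]
    (f : ℝ → α) (r : ℝ) : ∑' j : ℤ, f (r - j) = ∑' j : ℤ, f (Int.fract r - j) := by
  rw [← (Equiv.addRight ⌊r⌋).tsum_eq]
  congr 1 with j
  rw [Equiv.coe_addRight, Int.fract, Int.cast_add, sub_sub, add_comm]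

/-- One-dimensional unity condition: for every `r ∈ ℝ`, the sum over all integers `j`
of `φ(r − j)` equals `1`. -/
theorem peskinPhi_unity (r : ℝ) : ∑' j : ℤ, peskinPhi (r - j) = 1 := by
  have hfract : Int.fract r ∈ Set.Icc (0 : ℝ) 1 :=
    ⟨Int.fract_nonneg r, (Int.fract_lt_one r).le⟩
  rw [tsum_sub_intCast_eq_tsum_fract_sub,
    tsum_eq_sum fun _ hj ↦ peskinPhi_sub_intCast_eq_zero hfract hj,
    sum_peskinPhi_sub_intCast_Icc hfract]
end

section
/- For every radial parameter ω > 0 and every X ∈ ℝ³, the smoothed delta function integrates to one: ∫_{ℝ³} δ̂(x − X, ω) dx = 1 (with respect to Lebesgue measure on ℝ³). -/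
/-!
The integer translates of `φ` form a partition of unity: for `-2 ≤ x ≤ -1`,
`φ x + φ (x + 1) + φ (x + 2) + φ (x + 3) = 1`, the square roots cancelling in pairs. Since `φ`
vanishes outside `(-2, 2)`, cutting `ℝ` into unit intervals gives `∫ φ = 1`. The three factors
of `δ̂` separate by Fubini, and each rescaled, translated copy of `φ` still has integral one.
-/

open MeasureTheory

/-- The smoothed Dirac delta function `δ̂(x, ω) = ω⁻³ φ(x₁/ω) φ(x₂/ω) φ(x₃/ω)`. -/
noncomputable def deltaHat (x : Fin 3 → ℝ) (ω : ℝ) : ℝ :=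
  ω⁻¹ ^ 3 * (peskinPhi (x 0 / ω) * peskinPhi (x 1 / ω) * peskinPhi (x 2 / ω))

open Finset Function

lemma intervalIntegral.integral_sum_comp_add_nat {f : ℝ → ℝ}
    (hf : ∀ a b, IntervalIntegrable f volume a b) (a : ℝ) (n : ℕ) :
    ∫ x in a..a + 1, ∑ k ∈ range n, f (x + k) = ∫ x in a..a + n, f x := by
  have hshift (c : ℝ) : IntervalIntegrable (fun x => f (x + c)) volume a (a + 1) := by
    simpa using (hf (a + c) (a + 1 + c)).comp_add_right c
  rw [intervalIntegral.integral_finsetSum fun k (_ : k ∈ range n) => hshift (k : ℝ)]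
  simp only [intervalIntegral.integral_comp_add_right]
  convert intervalIntegral.sum_integral_adjacent_intervals (a := fun k : ℕ => a + k)
    fun k _ => hf _ _ using 3 <;> push_cast <;> ring

namespace peskinPhi

lemma of_abs_le_one {r : ℝ} (h : |r| ≤ 1) :
    peskinPhi r = (3 - 2 * |r| + Real.sqrt (1 + 4 * |r| - 4 * |r| ^ 2)) / 8 :=
  if_pos h

lemma of_one_le_abs_le_two {r : ℝ} (h₁ : 1 ≤ |r|) (h₂ : |r| ≤ 2) :
    peskinPhi r = (5 - 2 * |r| - Real.sqrt (-7 + 12 * |r| - 4 * |r| ^ 2)) / 8 := by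
  rcases h₁.eq_or_lt with h | h
  · rw [of_abs_le_one h.ge, ← h]; norm_num
  · exact (if_neg h.not_ge).trans (if_pos h₂)

lemma of_two_le_abs {r : ℝ} (h : 2 ≤ |r|) : peskinPhi r = 0 := by
  rcases h.eq_or_lt with h | h
  · rw [of_one_le_abs_le_two (by linarith) h.ge, ← h]; norm_num
  · exact (if_neg (by linarith)).trans (if_neg h.not_ge)

lemma support_subset_Ioo : support peskinPhi ⊆ Set.Ioo (-2) 2 := fun _ hr =>
  abs_lt.mp (not_le.mp fun h => hr (of_two_le_abs h))

lemma continuous : Continuous peskinPhi := by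
  refine Continuous.if_le (by fun_prop) ?_ continuous_abs continuous_const fun _ h => ?_
  · exact Continuous.if_le (by fun_prop) continuous_const continuous_abs continuous_const
      fun _ h => by rw [h]; norm_num
  · rw [h]; norm_num

lemma integrable : Integrable peskinPhi :=
  continuous.integrable_of_hasCompactSupport <|
    HasCompactSupport.intro isCompact_Icc fun _ hr => notMem_support.mp
      fun h => hr (Set.Ioo_subset_Icc_self (support_subset_Ioo h))

lemma sum_comp_add_nat_eq_one {x : ℝ} (h₁ : -2 ≤ x) (h₂ : x ≤ -1) :
    ∑ k ∈ range 4, peskinPhi (x + k) = 1 := by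
  have a₀ : |x| = 2 - (x + 2) := by rw [abs_of_neg (by linarith)]; ring
  have a₁ : |x + 1| = 1 - (x + 2) := by rw [abs_of_nonpos (by linarith)]; ring
  have a₂ : |x + 2| = x + 2 := abs_of_nonneg (by linarith)
  have a₃ : |x + 3| = 1 + (x + 2) := by rw [abs_of_pos (by linarith)]; ring
  simp only [sum_range_succ, range_zero, sum_empty, Nat.cast_zero, Nat.cast_one, Nat.cast_ofNat,
    add_zero, zero_add]
  rw [of_one_le_abs_le_two (by linarith) (by linarith), of_abs_le_one (by linarith),
    of_abs_le_one (by linarith), of_one_le_abs_le_two (by linarith) (by linarith),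
    a₀, a₁, a₂, a₃]
  generalize x + 2 = y
  rw [show -7 + 12 * (2 - y) - 4 * (2 - y) ^ 2 = 1 + 4 * (1 - y) - 4 * (1 - y) ^ 2 by ring,
    show -7 + 12 * (1 + y) - 4 * (1 + y) ^ 2 = 1 + 4 * y - 4 * y ^ 2 by ring]
  ring

lemma integral : ∫ r, peskinPhi r = 1 := by
  have hpart : ∀ x ∈ Set.uIcc (-2 : ℝ) (-2 + 1),
      ∑ k ∈ range 4, peskinPhi (x + k) = 1 := by
    intro x hx
    rw [Set.uIcc_of_le (by norm_num)] at hx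
    exact sum_comp_add_nat_eq_one hx.1 (by linarith [hx.2])
  calc ∫ r, peskinPhi r
      = ∫ x in (-2)..(-2 + ((4 : ℕ) : ℝ)), peskinPhi x := by
        rw [intervalIntegral.integral_eq_integral_of_support_subset]
        exact support_subset_Ioo.trans (by norm_num [Set.Ioo_subset_Ioc_self])
    _ = ∫ x in (-2)..(-2 + 1), ∑ k ∈ range 4, peskinPhi (x + k) :=
        (intervalIntegral.integral_sum_comp_add_nat
          (fun _ _ => integrable.intervalIntegrable) _ _).symm
    _ = 1 := by rw [intervalIntegral.integral_congr (g := fun _ => 1) hpart]; norm_num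

end peskinPhi

lemma integral_inv_mul_comp_sub_div {ω : ℝ} (hω : 0 < ω) (f : ℝ → ℝ) (c : ℝ) :
    ∫ t, ω⁻¹ * f ((t - c) / ω) = ∫ t, f t := by
  rw [integral_const_mul, integral_sub_right_eq_self (fun t => f (t / ω)),
    Measure.integral_comp_div, abs_of_pos hω, smul_eq_mul, inv_mul_cancel_left₀ hω.ne']

/-- For every radial parameter `ω > 0` and every `X ∈ ℝ³`, the smoothed delta function
integrates to one: `∫_{ℝ³} δ̂(x − X, ω) dx = 1` (with respect to Lebesgue measure). -/
theorem deltaHat_integral (ω : ℝ) (hω : 0 < ω) (X : Fin 3 → ℝ) :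
    (∫ x : Fin 3 → ℝ, deltaHat (x - X) ω) = 1 := by
  have hfactor (x : Fin 3 → ℝ) :
      deltaHat (x - X) ω = ∏ i, ω⁻¹ * peskinPhi ((x i - X i) / ω) := by
    simp only [deltaHat, Fin.prod_univ_three, Pi.sub_apply]
    ring
  simp_rw [hfactor]
  rw [integral_fintype_prod_volume_eq_prod fun i t => ω⁻¹ * peskinPhi ((t - X i) / ω)]
  simp only [integral_inv_mul_comp_sub_div hω, peskinPhi.integral, prod_const_one]
end

section
/- Analytic solution of the oscillatory shear (Stokes) problem: let ρ, μ, ν, y_L > 0 and set k = √(νρ/(2μ)). Define w(y) = sinh(k·y·(1+i))/sinh(k·y_L·(1+i)) ∈ ℂ and u(y,t) = |w(y)|·sin(ν·t + arg w(y)), which equals Im(w(y)·e^{iνt}). Then u satisfies ρ·∂u/∂t(y,t) = μ·∂²u/∂y²(y,t) for all (y,t) ∈ ℝ², together with the boundary conditions u(0,t) = 0 and u(y_L,t) = sin(ν·t) for all t. -/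
/-!
Writing `a = k(1 + i)`, the profile `w(y) = sinh(a y)/sinh(a y_L)` times `e^{iνt}` is a complex
solution of `ρ ∂ₜU = μ ∂²ᵧU`, because `a² = 2ik² = iνρ/μ` is exactly the dispersion relation of
the heat equation at frequency `ν`. Taking imaginary parts gives a real solution, which is `u` in
polar form. The boundary values are `w(0) = 0` and `w(y_L) = 1`; the latter needs
`sinh(a y_L) ≠ 0`, which holds since `Re(a y_L) = k y_L > 0` while `sinh` vanishes only on `iℝ`.
-/

open Complex

namespace Complex

theorem im_mul_exp_I_mul (z : ℂ) (θ : ℝ) :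
    (z * exp (I * θ)).im = ‖z‖ * Real.sin (θ + arg z) := by
  conv_lhs => rw [← norm_mul_exp_arg_mul_I z, mul_assoc, ← exp_add]
  rw [im_ofReal_mul, show (arg z : ℂ) * I + I * θ = (θ + arg z : ℝ) * I by push_cast; ring,
    exp_ofReal_mul_I_im]

theorem sinh_ne_zero_of_re_ne_zero {z : ℂ} (hz : z.re ≠ 0) : sinh z ≠ 0 := by
  intro h
  obtain ⟨n, hn⟩ := sin_eq_zero_iff.1 (show sin (z * I) = 0 by rw [sin_mul_I, h, zero_mul])
  exact hz (by simpa using congrArg im hn)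

end Complex

theorem HasDerivAt.complex_im {f : ℝ → ℂ} {f' : ℂ} {x : ℝ} (h : HasDerivAt f f' x) :
    HasDerivAt (fun x => (f x).im) f'.im x :=
  imCLM.hasFDerivAt.comp_hasDerivAt x h

theorem deriv_im_mul_exp_I_mul (c : ℂ) (ω t : ℝ) :
    deriv (fun s : ℝ => (c * exp (I * (ω * s))).im) t =
      (c * (ω * I) * exp (I * (ω * t))).im := by
  have h : HasDerivAt (fun s : ℂ => I * (ω * s)) (ω * I) t := by
    simpa [mul_comm, mul_left_comm] using (hasDerivAt_id (t : ℂ)).const_mul (I * ω)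
  simpa [mul_comm, mul_left_comm, mul_assoc] using
    ((h.cexp.comp_ofReal).const_mul c).complex_im.deriv

theorem hasDerivAt_sinh_mul_ofReal (a : ℂ) (y : ℝ) :
    HasDerivAt (fun z : ℝ => sinh (a * z)) (a * cosh (a * y)) y := by
  simpa [mul_comm] using (((hasDerivAt_id (y : ℂ)).const_mul a).csinh).comp_ofReal

theorem hasDerivAt_cosh_mul_ofReal (a : ℂ) (y : ℝ) :
    HasDerivAt (fun z : ℝ => cosh (a * z)) (a * sinh (a * y)) y := by
  simpa [mul_comm] using (((hasDerivAt_id (y : ℂ)).const_mul a).ccosh).comp_ofReal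

theorem deriv_deriv_im_mul_sinh_mul (c a d : ℂ) (y : ℝ) :
    deriv (deriv fun z : ℝ => (c * sinh (a * z) * d).im) y = (c * a ^ 2 * sinh (a * y) * d).im := by
  have h₁ : deriv (fun z : ℝ => (c * sinh (a * z) * d).im) =
      fun z : ℝ => (c * a * d * cosh (a * z)).im := by
    funext z
    simpa [mul_comm, mul_left_comm, mul_assoc] using
      ((hasDerivAt_sinh_mul_ofReal a z).const_mul (c * d)).complex_im.deriv
  rw [h₁, ((hasDerivAt_cosh_mul_ofReal a y).const_mul (c * a * d)).complex_im.deriv]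
  ring_nf

theorem heat_equation_im_sinh_mul_exp {ρ μ ω : ℝ} {a : ℂ} (h : (ρ : ℂ) * (ω * I) = μ * a ^ 2)
    (c : ℂ) (y t : ℝ) :
    ρ * deriv (fun s : ℝ => (c * sinh (a * y) * exp (I * (ω * s))).im) t =
      μ * deriv (deriv fun z : ℝ => (c * sinh (a * z) * exp (I * (ω * t))).im) y := by
  rw [deriv_im_mul_exp_I_mul, deriv_deriv_im_mul_sinh_mul, ← im_ofReal_mul, ← im_ofReal_mul]
  congr 1
  linear_combination (c * sinh (a * y) * exp (I * (ω * t))) * h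

theorem ofReal_mul_mul_I_eq_mul_sq {ρ μ ν k : ℝ} (hμ : μ ≠ 0) (hk : k ^ 2 = ν * ρ / (2 * μ)) :
    (ρ : ℂ) * (ν * I) = μ * (k * (1 + I)) ^ 2 := by
  have hk' : (k : ℂ) ^ 2 * (2 * μ) = ν * ρ := by
    exact_mod_cast (eq_div_iff (by positivity)).1 hk
  linear_combination (-I) * hk' - (μ * k ^ 2 : ℂ) * I_sq

/-- Analytic solution of the oscillatory shear (Stokes) problem: with
`k = √(νρ/(2μ))`, `w(y) = sinh(k·y·(1+i))/sinh(k·y_L·(1+i))`, and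
`u(y,t) = |w(y)|·sin(ν·t + arg w(y))` (which equals `Im(w(y)·e^{iνt})`),
the function `u` satisfies `ρ·∂u/∂t = μ·∂²u/∂y²` for all `(y,t)`, with boundary
conditions `u(0,t) = 0` and `u(y_L,t) = sin(ν·t)`. -/
theorem oscillatory_shear_solution (ρ μ ν yL : ℝ)
    (hρ : 0 < ρ) (hμ : 0 < μ) (hν : 0 < ν) (hyL : 0 < yL)
    (k : ℝ) (hk : k = Real.sqrt (ν * ρ / (2 * μ)))
    (w : ℝ → ℂ)
    (hw : ∀ y : ℝ, w y =
      Complex.sinh ((k : ℂ) * y * (1 + Complex.I)) /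
        Complex.sinh ((k : ℂ) * yL * (1 + Complex.I)))
    (u : ℝ → ℝ → ℝ)
    (hu : ∀ y t : ℝ, u y t = ‖w y‖ * Real.sin (ν * t + Complex.arg (w y))) :
    (∀ y t : ℝ, u y t = (w y * Complex.exp (Complex.I * (ν * t))).im) ∧
    (∀ y t : ℝ,
      ρ * deriv (fun s => u y s) t = μ * deriv (deriv (fun z => u z t)) y) ∧
    (∀ t : ℝ, u 0 t = 0) ∧
    (∀ t : ℝ, u yL t = Real.sin (ν * t)) := by
  have hk0 : 0 < k := hk ▸ Real.sqrt_pos.2 (by positivity)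
  obtain ⟨a, ha⟩ : ∃ a : ℂ, a = k * (1 + I) := ⟨_, rfl⟩
  have hdisp : (ρ : ℂ) * (ν * I) = μ * a ^ 2 :=
    ha ▸ ofReal_mul_mul_I_eq_mul_sq hμ.ne' (hk ▸ Real.sq_sqrt (by positivity))
  have hC : sinh (a * yL) ≠ 0 :=
    sinh_ne_zero_of_re_ne_zero (by simp [ha, hk0.ne', hyL.ne'])
  have hw' : ∀ y : ℝ, w y = (sinh (a * yL))⁻¹ * sinh (a * y) := fun y => by
    rw [hw, div_eq_inv_mul, ha]; ring_nf
  have hpolar : ∀ y t : ℝ, u y t = (w y * exp (I * (ν * t))).im := fun y t => by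
    rw [hu, ← ofReal_mul, im_mul_exp_I_mul]
  refine ⟨hpolar, fun y t => ?_, fun t => ?_, fun t => ?_⟩
  · simp_rw [hpolar, hw']
    exact heat_equation_im_sinh_mul_exp hdisp _ y t
  · simp [hu, hw']
  · simp [hu, hw', hC]
end

section
/- Rotation period of an ellipsoidal aggregate in simple shear (Blaser's formula): let a₁, a₂, τ > 0 and let θ : ℝ → ℝ be differentiable and satisfy the Jeffery orbit equation θ′(t) = τ·(a₁²·cos²θ(t) + a₂²·sin²θ(t))/(a₁² + a₂²) for all t ∈ ℝ. Then θ advances by exactly one full revolution over each interval of length T = 2π(a₁² + a₂²)/(a₁·a₂·τ); that is, θ(t + T) = θ(t) + 2π for all t ∈ ℝ. -/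
/-!
Let `Φ(φ) = ∫₀^φ a₁a₂ / (a₁² cos² ψ + a₂² sin² ψ) dψ`, a continuous branch of
`arctan ((a₂ / a₁) tan φ)`. It is strictly increasing and `Φ(φ + 2π) = Φ(φ) + 2π`, and along a
solution of the Jeffery equation `Φ ∘ θ` grows linearly with slope `a₁a₂τ / (a₁² + a₂²)`.
Hence after the time `T = 2π (a₁² + a₂²) / (a₁a₂τ)` the phase `Φ(θ)` has gained exactly `2π`,
and injectivity of `Φ` forces `θ(t + T) = θ(t) + 2π`.
-/

open Real

lemma mul_cos_sq_add_mul_sin_sq_pos {a b : ℝ} (ha : 0 < a) (hb : 0 < b) (x : ℝ) :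
    0 < a * cos x ^ 2 + b * sin x ^ 2 := by
  nlinarith [sin_sq_add_cos_sq x, sq_nonneg (sin x), sq_nonneg (cos x), min_le_left a b,
    min_le_right a b, lt_min ha hb]

/-- By the subtraction formula for `arctan`, this agrees with `arctan ((b / a) tan φ)` up to a
multiple of `π` wherever `cos φ ≠ 0`, but unlike it is smooth on all of `ℝ`. -/
noncomputable def jefferyPhase (a b φ : ℝ) : ℝ :=
  φ + arctan ((b - a) * sin φ * cos φ / (a * cos φ ^ 2 + b * sin φ ^ 2))

lemma jefferyPhase_add_two_pi (a b φ : ℝ) :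
    jefferyPhase a b (φ + 2 * π) = jefferyPhase a b φ + 2 * π := by
  simp only [jefferyPhase, sin_add_two_pi, cos_add_two_pi]
  ring

lemma hasDerivAt_jefferyPhase {a b : ℝ} (ha : 0 < a) (hb : 0 < b) (φ : ℝ) :
    HasDerivAt (jefferyPhase a b) (a * b / (a ^ 2 * cos φ ^ 2 + b ^ 2 * sin φ ^ 2)) φ := by
  set c := cos φ with hc
  set s := sin φ with hs
  have hpy : s ^ 2 + c ^ 2 = 1 := sin_sq_add_cos_sq φ
  have hD : a * c ^ 2 + b * s ^ 2 ≠ 0 := (mul_cos_sq_add_mul_sin_sq_pos ha hb φ).ne'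
  have hD₂ : a ^ 2 * c ^ 2 + b ^ 2 * s ^ 2 ≠ 0 :=
    (mul_cos_sq_add_mul_sin_sq_pos (pow_pos ha 2) (pow_pos hb 2) φ).ne'
  have hnum : HasDerivAt (fun x ↦ (b - a) * sin x * cos x) ((b - a) * (c ^ 2 - s ^ 2)) φ :=
    ((hasDerivAt_sin φ).const_mul (b - a)).mul (hasDerivAt_cos φ) |>.congr_deriv (by ring)
  have hden : HasDerivAt (fun x ↦ a * cos x ^ 2 + b * sin x ^ 2) (2 * (b - a) * s * c) φ :=
    (((hasDerivAt_cos φ).pow 2).const_mul a).add (((hasDerivAt_sin φ).pow 2).const_mul b)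
      |>.congr_deriv (by ring)
  refine (hasDerivAt_id φ).add ((hnum.div hden hD).arctan) |>.congr_deriv ?_
  have hsum : (a * c ^ 2 + b * s ^ 2) ^ 2 + ((b - a) * s * c) ^ 2 =
      a ^ 2 * c ^ 2 + b ^ 2 * s ^ 2 := by
    linear_combination (a ^ 2 * c ^ 2 + b ^ 2 * s ^ 2) * hpy
  have hsec_sq : 1 + ((b - a) * s * c / (a * c ^ 2 + b * s ^ 2)) ^ 2
      = (a ^ 2 * c ^ 2 + b ^ 2 * s ^ 2) / (a * c ^ 2 + b * s ^ 2) ^ 2 := by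
    rw [← hsum]
    field_simp
  simp only [Pi.div_apply, ← hc, ← hs, hsec_sq]
  field_simp
  linear_combination (a * b + (b - a) * (a * c ^ 2 - b * s ^ 2)) * hpy

lemma strictMono_jefferyPhase {a b : ℝ} (ha : 0 < a) (hb : 0 < b) :
    StrictMono (jefferyPhase a b) :=
  strictMono_of_hasDerivAt_pos (hasDerivAt_jefferyPhase ha hb) fun φ ↦
    div_pos (mul_pos ha hb) (mul_cos_sq_add_mul_sin_sq_pos (pow_pos ha 2) (pow_pos hb 2) φ)

lemma apply_add_div_eq_add_of_hasDerivAt_comp {G θ : ℝ → ℝ} {k p : ℝ}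
    (hG : Function.Injective G) (hGp : ∀ x, G (x + p) = G x + p) (hk : k ≠ 0)
    (hθ : ∀ t, HasDerivAt (fun t ↦ G (θ t)) k t) (t : ℝ) :
    θ (t + p / k) = θ t + p := by
  have hflat : ∀ s, HasDerivAt (fun s ↦ G (θ s) - k * s) 0 s := fun s ↦
    ((hθ s).sub ((hasDerivAt_id' s).const_mul k)).congr_deriv (by ring)
  have hconst := is_const_of_deriv_eq_zero (fun s ↦ (hflat s).differentiableAt)
    (fun s ↦ (hflat s).deriv) (t + p / k) t
  apply hG
  rw [hGp, ← sub_eq_zero, ← sub_eq_zero_of_eq hconst]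
  field_simp
  ring

/-- Rotation period of an ellipsoidal aggregate in simple shear (Blaser's formula): if
`θ` satisfies the Jeffery orbit equation
`θ′(t) = τ·(a₁²·cos²θ + a₂²·sin²θ)/(a₁² + a₂²)`, then `θ` advances by exactly one
full revolution over each interval of length `T = 2π(a₁² + a₂²)/(a₁·a₂·τ)`. -/
theorem jeffery_orbit_period (a₁ a₂ τ : ℝ) (ha₁ : 0 < a₁) (ha₂ : 0 < a₂) (hτ : 0 < τ)
    (θ : ℝ → ℝ) (hθ : Differentiable ℝ θ)
    (hode : ∀ t : ℝ, deriv θ t =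
      τ * (a₁ ^ 2 * Real.cos (θ t) ^ 2 + a₂ ^ 2 * Real.sin (θ t) ^ 2) / (a₁ ^ 2 + a₂ ^ 2)) :
    ∀ t : ℝ,
      θ (t + 2 * Real.pi * (a₁ ^ 2 + a₂ ^ 2) / (a₁ * a₂ * τ)) = θ t + 2 * Real.pi := by
  intro t
  set k := a₁ * a₂ * τ / (a₁ ^ 2 + a₂ ^ 2)
  have hphase : ∀ s, HasDerivAt (fun s ↦ jefferyPhase a₁ a₂ (θ s)) k s := fun s ↦ by
    have hD := (mul_cos_sq_add_mul_sin_sq_pos (pow_pos ha₁ 2) (pow_pos ha₂ 2) (θ s)).ne'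
    refine ((hasDerivAt_jefferyPhase ha₁ ha₂ (θ s)).comp s (hθ s).hasDerivAt).congr_deriv ?_
    rw [hode s]
    simp only [k]
    field_simp
  have hT : 2 * π * (a₁ ^ 2 + a₂ ^ 2) / (a₁ * a₂ * τ) = 2 * π / k := by
    simp only [k]
    field_simp
  rw [hT]
  exact apply_add_div_eq_add_of_hasDerivAt_comp (strictMono_jefferyPhase ha₁ ha₂).injective
    (jefferyPhase_add_two_pi a₁ a₂) (by positivity) hphase t
end
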